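/- arXiv:1010.3287 — 3 statements merged into one kernel-verified Lean document; each statement's English description precedes it below -/
import Mathlib

section
/- Let f : ℕ → ℕ be strictly increasing, f^T(m) = sup{k : f(k) ≤ m}, and define a ⊕ b = f^T(f(a) + f(b)) and a ≪ b iff b ⊕ a = b. If f(a+1) + f(a) < f(a+2), then a ≪ a+1. -/
theorem stmt_11 (f : ℕ → ℕ) (hf : StrictMono f)
    (fT : ℕ → ℕ) (hfT : ∀ m, fT m = Nat.findGreatest (fun k => f k ≤ m) m)
    (oplus : ℕ → ℕ → ℕ) (hop : ∀ a b, oplus a b = fT (f a + f b))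
    (a : ℕ) (hineq : f (a+1) + f a < f (a+2)) :
    oplus (a+1) a = a+1 := by
  rw [hop, hfT]
  set m := f (a+1) + f a with hm
  have hle : f (a+1) ≤ m := Nat.le_add_right _ _
  have hb : a + 1 ≤ m := le_trans hf.le_apply hle
  apply le_antisymm
  · by_contra h
    push_neg at h
    have hpos : 0 < Nat.findGreatest (fun k => f k ≤ m) m := by omega
    have hspec : f (Nat.findGreatest (fun k => f k ≤ m) m) ≤ m :=
      Nat.findGreatest_spec (P := fun k => f k ≤ m) hb hle
    have : f (a+2) ≤ f (Nat.findGreatest (fun k => f k ≤ m) m) := hf.le_iff_le.mpr h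
    omega
  · exact Nat.le_findGreatest hb hle
end

section
/- The relation ≪ in a projective arithmetic is compatible with the order: if a ≪ b and c ≤ a then c ≪ b, and if a ≪ b and b ≤ d then a ≪ d. Here f : ℕ → ℕ is strictly increasing with convex increments (a ≤ b implies f(a+1) − f(a) ≤ f(b+1) − f(b)), f^T(m) = sup{k : f(k) ≤ m}, a ⊕ b = f^T(f(a) + f(b)), and a ≪ b means b ⊕ a = b. -/
lemma aux_fg_eq (f : ℕ → ℕ) (hf : StrictMono f) (m b : ℕ)
    (h1 : f b ≤ m) (h2 : m < f (b+1)) :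
    Nat.findGreatest (fun k => f k ≤ m) m = b := by
  rw [Nat.findGreatest_eq_iff]
  refine ⟨le_trans hf.le_apply h1, fun _ => h1, fun n hn hnm hfn => ?_⟩
  have : f (b+1) ≤ f n := hf.le_iff_le.mpr hn
  omega

lemma aux_lt (f : ℕ → ℕ) (hf : StrictMono f) (m b : ℕ)
    (h : Nat.findGreatest (fun k => f k ≤ m) m = b) : m < f (b+1) := by
  subst h
  rcases le_or_gt (Nat.findGreatest (fun k => f k ≤ m) m + 1) m with hbm | hbm
  · have := Nat.findGreatest_is_greatest (lt_add_one _) hbm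
    simpa using Nat.lt_of_not_le this
  · exact lt_of_lt_of_le hbm hf.le_apply

theorem stmt_12 (f : ℕ → ℕ) (hf : StrictMono f) (h0 : f 0 = 0)
    (hconv : ∀ a b : ℕ, a ≤ b → f (a+1) - f a ≤ f (b+1) - f b)
    (fT : ℕ → ℕ) (hfT : ∀ m, fT m = Nat.findGreatest (fun k => f k ≤ m) m)
    (oplus : ℕ → ℕ → ℕ) (hop : ∀ a b, oplus a b = fT (f a + f b))
    (a b c d : ℕ) :
    (oplus b a = b → c ≤ a → oplus b c = b) ∧
    (oplus b a = b → b ≤ d → oplus d a = d) := by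
  constructor
  · intro h hca
    rw [hop, hfT] at h ⊢
    have hlt : f b + f a < f (b+1) := aux_lt f hf _ b h
    have hfc : f c ≤ f a := hf.monotone hca
    exact aux_fg_eq f hf _ b (Nat.le_add_right _ _) (by omega)
  · intro h hbd
    rw [hop, hfT] at h ⊢
    have hlt : f b + f a < f (b+1) := aux_lt f hf _ b h
    have h1 : f b ≤ f (b+1) := (hf (lt_add_one b)).le
    have h2 : f d ≤ f (d+1) := (hf (lt_add_one d)).le
    have hcv := hconv b d hbd
    exact aux_fg_eq f hf _ d (Nat.le_add_right _ _) (by omega)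
end

section
/- The relation ≪ in a projective arithmetic is transitive: if a ≪ b and b ≪ c then a ≪ c, where f : ℕ → ℕ is strictly increasing with f(0) = 0 and convex increments, f^T(m) = sup{k : f(k) ≤ m}, a ⊕ b = f^T(f(a) + f(b)), and x ≪ y means y ⊕ x = y. -/
theorem stmt_13 (f : ℕ → ℕ) (hf : StrictMono f) (h0 : f 0 = 0)
    (hconv : ∀ a b : ℕ, a ≤ b → f (a+1) - f a ≤ f (b+1) - f b)
    (fT : ℕ → ℕ) (hfT : ∀ m, fT m = Nat.findGreatest (fun k => f k ≤ m) m)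
    (oplus : ℕ → ℕ → ℕ) (hop : ∀ a b, oplus a b = fT (f a + f b))
    (a b c : ℕ) (hab : oplus b a = b) (hbc : oplus c b = c) :
    oplus c a = c := by
  have hle : ∀ k, k ≤ f k := fun k => hf.le_apply
  -- extract the key inequalities from the hypotheses
  have key : ∀ x y : ℕ, oplus y x = y → f y + f x < f (y + 1) := by
    intro x y h
    by_contra hcon
    push_neg at hcon
    rw [hop, hfT] at h
    have hb : y + 1 ≤ f y + f x := le_trans (hle (y+1)) hcon
    have := Nat.le_findGreatest (P := fun k => f k ≤ f y + f x) hb hcon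
    omega
  have h1 := key a b hab
  have h2 := key b c hbc
  have hbc' : b ≤ c := by
    have : f b < f (c + 1) := by omega
    exact Nat.lt_succ_iff.mp (hf.lt_iff_lt.mp this)
  have hconv' := hconv b c hbc'
  have hmono : f c ≤ f (c + 1) := (hf (Nat.lt_succ_self c)).le
  have hmono2 : f b ≤ f (b + 1) := (hf (Nat.lt_succ_self b)).le
  have hca : f c + f a < f (c + 1) := by omega
  rw [hop, hfT]
  have hmain : Nat.findGreatest (fun k => f k ≤ f c + f a) (f c + f a) = c := by
    apply Nat.findGreatest_eq_iff.mpr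
    refine ⟨le_trans (hle c) (Nat.le_add_right _ _), fun _ => Nat.le_add_right _ _, ?_⟩
    intro n hn _
    simp only [not_le]
    calc f c + f a < f (c + 1) := hca
      _ ≤ f n := hf.le_iff_le.mpr hn
  exact hmain
end
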